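/- arXiv:1112.0220 — 3 statements merged into one kernel-verified Lean document; each statement's English description precedes it below -/
import Mathlib

section
/- Let 0 < α < 1 and let X be a random variable with Laplace transform E e^{−tX} = exp(−(γ^α/cos(πα/2)) t^α − δt) for all t ≥ 0, where γ > 0 and δ ≥ 0. Then X > 0 almost surely. -/
open MeasureTheory ProbabilityTheory Filter Topology

theorem stmt9
    {Ω : Type*} [MeasureSpace Ω] [IsProbabilityMeasure (ℙ : Measure Ω)]
    (α γ δ : ℝ) (hα : 0 < α) (hα1 : α < 1) (hγ : 0 < γ) (hδ : 0 ≤ δ)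
    (X : Ω → ℝ) (hX : Measurable X)
    (hL : ∀ t : ℝ, 0 ≤ t →
      Integrable (fun ω => Real.exp (-t * X ω)) ℙ ∧
      ∫ ω, Real.exp (-t * X ω) ∂ℙ =
        Real.exp (-(γ ^ α / Real.cos (Real.pi * α / 2)) * t ^ α - δ * t)) :
    ∀ᵐ ω ∂ℙ, 0 < X ω := by
  set c : ℝ := γ ^ α / Real.cos (Real.pi * α / 2) with hc
  have hcos : 0 < Real.cos (Real.pi * α / 2) := by
    apply Real.cos_pos_of_mem_Ioo
    constructor
    · nlinarith [Real.pi_pos]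
    · nlinarith [Real.pi_pos]
  have hcpos : 0 < c := div_pos (Real.rpow_pos_of_pos hγ α) hcos
  set s : Set Ω := {ω | X ω ≤ 0} with hs
  have hsm : MeasurableSet s := hX measurableSet_Iic
  set p : ℝ := (ℙ s).toReal with hp
  -- For every t ≥ 0 : p ≤ exp (-c * t^α - δ * t)
  have key : ∀ t : ℝ, 0 ≤ t → p ≤ Real.exp (-c * t ^ α - δ * t) := by
    intro t ht
    obtain ⟨hint, heq⟩ := hL t ht
    rw [← heq]
    have hind : Integrable (s.indicator (fun _ => (1 : ℝ))) ℙ :=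
      (integrable_const (1 : ℝ)).indicator hsm
    have hmono : ∀ ω, s.indicator (fun _ => (1 : ℝ)) ω ≤ Real.exp (-t * X ω) := by
      intro ω
      by_cases hω : ω ∈ s
      · rw [Set.indicator_of_mem hω]
        apply Real.one_le_exp
        have : X ω ≤ 0 := hω
        nlinarith
      · rw [Set.indicator_of_notMem hω]
        exact (Real.exp_pos _).le
    calc p = ∫ ω, s.indicator (fun _ => (1 : ℝ)) ω ∂ℙ := by
            rw [integral_indicator_const (1 : ℝ) hsm, smul_eq_mul, mul_one]
            rfl
      _ ≤ ∫ ω, Real.exp (-t * X ω) ∂ℙ := integral_mono hind hint hmono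
  -- The bound tends to 0
  have htend : Tendsto (fun t : ℝ => Real.exp (-c * t ^ α - δ * t)) atTop (𝓝 0) := by
    apply Real.tendsto_exp_atBot.comp
    have h1 : Tendsto (fun t : ℝ => c * t ^ α + δ * t) atTop atTop := by
      apply Tendsto.atTop_add_zero_eventuallyLE
      · exact (tendsto_rpow_atTop hα).const_mul_atTop hcpos
      · filter_upwards [eventually_ge_atTop (0 : ℝ)] with t ht
        positivity
    have h2 : Tendsto (fun t : ℝ => -(c * t ^ α + δ * t)) atTop atBot :=
      tendsto_neg_atTop_atBot.comp h1
    convert h2 using 2 with t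
    ring
  have hp0 : p ≤ 0 := by
    refine ge_of_tendsto htend ?_
    filter_upwards [eventually_ge_atTop (0 : ℝ)] with t ht using key t ht
  have hps : ℙ s = 0 := by
    have := ENNReal.toReal_nonneg (a := ℙ s)
    have hpe : (ℙ s).toReal = 0 := le_antisymm hp0 this
    exact (ENNReal.toReal_eq_zero_iff _).mp hpe |>.resolve_right (measure_ne_top _ _)
  rw [ae_iff]
  convert hps using 2
  ext ω
  simp [hs, not_lt]
end

section
/- For 1 < α < 2, the density at 0 of the stable distribution S_α(γ, 1, 0) equals γ^{−1} |cos(πα/2)|^{1/α} / |Γ(−1/α)|. -/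
open MeasureTheory ProbabilityTheory Filter Topology

section AuxLemmas
open Set Complex Metric



lemma measSign : Measurable Real.sign := by
  have h : Real.sign = fun r : ℝ => if r < 0 then (-1:ℝ) else if 0 < r then 1 else 0 := by
    funext r; rw [Real.sign]
  rw [h]
  exact Measurable.ite (measurableSet_lt measurable_id measurable_const) measurable_const
    (Measurable.ite (measurableSet_lt measurable_const measurable_id) measurable_const
      measurable_const)

lemma normPhi (x τ s : ℝ) :
    ‖Complex.exp (-((x:ℝ):ℂ) * (1 - Complex.I * τ * s))‖ = Real.exp (-x) := by
  rw [Complex.norm_exp]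
  congr 1
  simp [Complex.mul_re]

lemma evenIntegrable {b α : ℝ} (hb : 0 < b) (hα : 1 ≤ α) :
    Integrable (fun t : ℝ => Real.exp (-b * |t| ^ α)) := by
  have hIoi : IntegrableOn (fun t : ℝ => Real.exp (-b * |t| ^ α)) (Ioi 0) := by
    refine ((integrableOn_rpow_mul_exp_neg_mul_rpow (s := 0) (by norm_num) (by linarith) hb)).congr_fun
      (fun x hx => ?_) measurableSet_Ioi
    beta_reduce
    rw [Real.rpow_zero, one_mul, abs_of_pos hx]
  have hIic : IntegrableOn (fun t : ℝ => Real.exp (-b * |t| ^ α)) (Iic 0) := by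
    rw [← Measure.map_neg_eq_self (volume : Measure ℝ)]
    have m : MeasurableEmbedding fun x : ℝ => -x := (Homeomorph.neg ℝ).measurableEmbedding
    rw [m.integrableOn_map_iff]
    simp_rw [Function.comp_def, abs_neg, neg_preimage, neg_Iic, neg_zero]
    exact Iff.mpr integrableOn_Ici_iff_integrableOn_Ioi hIoi
  have h := hIic.union hIoi
  rw [Iic_union_Ioi] at h
  exact integrableOn_univ.mp h

lemma keyIntegrable {b α : ℝ} (hb : 0 < b) (hα : 1 ≤ α) (τ : ℝ) :
    Integrable (fun t : ℝ =>
      Complex.exp (-((b * |t| ^ α : ℝ) : ℂ) * (1 - Complex.I * τ * Real.sign t))) := by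
  have hmeas : Measurable (fun t : ℝ =>
      Complex.exp (-((b * |t| ^ α : ℝ) : ℂ) * (1 - Complex.I * τ * Real.sign t))) := by
    apply Complex.measurable_exp.comp
    apply Measurable.mul
    · exact (Complex.measurable_ofReal.comp
        ((measurable_const.mul ((measurable_id.abs).pow_const α)))).neg
    · exact measurable_const.sub
        ((measurable_const.mul measurable_const).mul
          (Complex.measurable_ofReal.comp measSign))
  refine Integrable.mono' (evenIntegrable hb hα) hmeas.aestronglyMeasurable ?_
  filter_upwards with t
  rw [normPhi]
  rw [neg_mul]



lemma measA (s : ℝ) (c : ℂ) :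
    AEStronglyMeasurable (fun t : ℝ => ((t ^ (s - 1) : ℝ) : ℂ) * Complex.exp (-(c * t)))
      (volume.restrict (Ioi 0)) := by
  apply ContinuousOn.aestronglyMeasurable _ measurableSet_Ioi
  apply ContinuousOn.mul
  · exact continuous_ofReal.comp_continuousOn
      (continuousOn_id.rpow_const (fun x hx => Or.inl (ne_of_gt hx)))
  · exact (Complex.continuous_exp.comp ((continuous_const.mul continuous_ofReal).neg)).continuousOn

lemma normA {s : ℝ} {t : ℝ} (ht : 0 < t) (c : ℂ) :
    ‖((t ^ (s - 1) : ℝ) : ℂ) * Complex.exp (-(c * t))‖ = t ^ (s - 1) * Real.exp (-c.re * t) := by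
  rw [norm_mul, Complex.norm_exp]
  have h1 : ‖((t ^ (s - 1) : ℝ) : ℂ)‖ = t ^ (s - 1) := by
    rw [Complex.norm_real, Real.norm_eq_abs, _root_.abs_of_nonneg (Real.rpow_nonneg (le_of_lt ht) _)]
  have h2 : (-(c * (t:ℂ))).re = -c.re * t := by simp [Complex.mul_re]
  rw [h1, h2]

lemma intA {s : ℝ} (hs : 0 < s) {c : ℂ} (hc : 0 < c.re) :
    IntegrableOn (fun t : ℝ => ((t ^ (s - 1) : ℝ) : ℂ) * Complex.exp (-(c * t))) (Ioi 0) := by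
  have hbound : IntegrableOn (fun t : ℝ => t ^ (s - 1) * Real.exp (-c.re * t)) (Ioi 0) := by
    have := integrableOn_rpow_mul_exp_neg_mul_rpow (p := 1) (s := s - 1) (b := c.re)
      (by linarith) one_pos hc
    simpa [Real.rpow_one] using this
  refine Integrable.mono' hbound (measA s c) ?_
  filter_upwards [ae_restrict_mem measurableSet_Ioi] with t ht
  rw [normA ht c]

lemma gammaA {s : ℝ} (hs : 0 < s) {c : ℂ} (hc : 0 < c.re) :
    ∫ t in Ioi (0:ℝ), ((t ^ (s - 1) : ℝ) : ℂ) * Complex.exp (-(c * t)) =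
      Complex.Gamma s * c ^ (-(s:ℂ)) := by
  set U : Set ℂ := {z | 0 < z.re} with hUdef
  have hUopen : IsOpen U := isOpen_lt continuous_const Complex.continuous_re
  set F : ℂ → ℂ := fun c => ∫ t in Ioi (0:ℝ), ((t ^ (s - 1) : ℝ) : ℂ) * Complex.exp (-(c * t))
    with hF
  set G : ℂ → ℂ := fun c => Complex.Gamma s * c ^ (-(s:ℂ)) with hG
  have hFdiff : DifferentiableOn ℂ F U := by
    intro c₀ hc₀
    have hc₀re : 0 < c₀.re := hc₀
    set ε : ℝ := c₀.re / 2 with hε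
    have hεpos : 0 < ε := by positivity
    have key := hasDerivAt_integral_of_dominated_loc_of_deriv_le (𝕜 := ℂ)
      (μ := volume.restrict (Ioi (0:ℝ)))
      (F := fun c t => ((t ^ (s - 1) : ℝ) : ℂ) * Complex.exp (-(c * t)))
      (F' := fun c t => ((t ^ (s - 1) : ℝ) : ℂ) * (-(t:ℂ) * Complex.exp (-(c * t))))
      (x₀ := c₀) (bound := fun t => t ^ s * Real.exp (-ε * t)) (Metric.ball_mem_nhds c₀ hεpos)
      ?_ ?_ ?_ ?_ ?_ ?_
    · exact (key.2.differentiableAt).differentiableWithinAt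
    · filter_upwards with c using measA s c
    · exact intA hs hc₀re
    · -- measurability of F' c₀
      apply ContinuousOn.aestronglyMeasurable _ measurableSet_Ioi
      apply ContinuousOn.mul
      · exact continuous_ofReal.comp_continuousOn
          (continuousOn_id.rpow_const (fun x hx => Or.inl (ne_of_gt hx)))
      · exact (continuous_ofReal.neg.mul (Complex.continuous_exp.comp
          ((continuous_const.mul continuous_ofReal).neg))).continuousOn
    · -- bound
      filter_upwards [ae_restrict_mem measurableSet_Ioi] with t ht c hcball
      have ht0 : (0:ℝ) < t := ht
      have hcre : ε ≤ c.re := by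
        have h1 : ‖c - c₀‖ < ε := by simpa [dist_eq_norm] using hcball
        have h2 : |(c - c₀).re| ≤ ‖c - c₀‖ := Complex.abs_re_le_norm _
        have h3 : |c.re - c₀.re| ≤ ‖c - c₀‖ := by simpa using h2
        have := abs_le.mp h3
        have := this.1
        simp only [hε]
        linarith
      rw [norm_mul, norm_mul]
      have h1 : ‖((t ^ (s - 1) : ℝ) : ℂ)‖ = t ^ (s - 1) := by
        rw [Complex.norm_real, Real.norm_eq_abs,
          _root_.abs_of_nonneg (Real.rpow_nonneg (le_of_lt ht0) _)]
      have h2 : ‖(-(t:ℂ))‖ = t := by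
        rw [norm_neg, Complex.norm_real, Real.norm_eq_abs, _root_.abs_of_nonneg ht0.le]
      have h3 : ‖Complex.exp (-(c * t))‖ = Real.exp (-c.re * t) := by
        rw [Complex.norm_exp]
        congr 1
        simp [Complex.mul_re]
      rw [h1, h2, h3]
      have h4 : t ^ (s - 1) * (t * Real.exp (-c.re * t)) = t ^ s * Real.exp (-c.re * t) := by
        rw [← mul_assoc]
        congr 1
        conv_rhs => rw [show s = (s-1)+1 by ring, Real.rpow_add_one ht0.ne']
      rw [h4]
      have h5 : Real.exp (-c.re * t) ≤ Real.exp (-ε * t) := by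
        apply Real.exp_le_exp.mpr
        nlinarith
      have h6 : 0 ≤ t ^ s := Real.rpow_nonneg ht0.le _
      nlinarith [mul_le_mul_of_nonneg_left h5 h6]
    · -- bound integrable
      have := integrableOn_rpow_mul_exp_neg_mul_rpow (p := 1) (s := s) (b := ε)
        (by linarith) one_pos hεpos
      simpa [Real.rpow_one, IntegrableOn] using this
    · -- derivative
      filter_upwards [ae_restrict_mem measurableSet_Ioi] with t ht c hcball
      have h1 : HasDerivAt (fun c : ℂ => -(c * (t:ℂ))) (-(t:ℂ)) c := by
        simpa [Pi.neg_def] using ((hasDerivAt_id c).mul_const ((t:ℝ):ℂ)).neg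
      have h2 := h1.cexp
      have h3 := h2.const_mul ((t ^ (s - 1) : ℝ) : ℂ)
      have e : (-(t:ℂ)) * Complex.exp (-(c * t)) = Complex.exp (-(c * t)) * -(t:ℂ) := by ring
      beta_reduce
      rw [e]
      exact h3
  have hGdiff : DifferentiableOn ℂ G U := by
    intro z hz
    have hzre : 0 < z.re := hz
    have : DifferentiableAt ℂ G z := by
      apply DifferentiableAt.const_mul
      exact (differentiableAt_id.cpow (differentiableAt_const _) (Or.inl hzre))
    exact this.differentiableWithinAt
  have hFG : EqOn F G U := by
    apply (hFdiff.analyticOnNhd hUopen).eqOn_of_preconnected_of_frequently_eq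
      (hGdiff.analyticOnNhd hUopen)
      ((convex_halfSpace_re_gt 0).isPreconnected) (show (1:ℂ) ∈ U by simp [hUdef])
    -- frequently equal near 1
    have hreal : ∀ r : ℝ, 0 < r → F r = G r := by
      intro r hr
      have h1 := Complex.integral_cpow_mul_exp_neg_mul_Ioi
        (a := (s:ℂ)) (r := r) (by simpa using hs) hr
      have h2 : F r = ∫ t in Ioi (0:ℝ), (t:ℂ) ^ ((s:ℂ) - 1) * Complex.exp (-((r:ℝ) * t)) := by
        rw [hF]
        apply setIntegral_congr_fun measurableSet_Ioi
        intro t ht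
        have := Complex.ofReal_cpow (le_of_lt ht) (s - 1)
        simp only
        rw [this]
        push_cast
        ring_nf
      rw [h2]
      rw [show (∫ t in Ioi (0:ℝ), (t:ℂ) ^ ((s:ℂ) - 1) * Complex.exp (-((r:ℝ) * t)))
        = (1 / (r:ℂ)) ^ (s:ℂ) * Complex.Gamma s from h1]
      rw [hG]
      have hrne : ((r:ℂ)) ≠ 0 := by exact_mod_cast hr.ne'
      rw [one_div, Complex.inv_cpow _ _ (by
        rw [Complex.arg_ofReal_of_nonneg hr.le]; exact Real.pi_ne_zero.symm ),
        ← Complex.cpow_neg, mul_comm]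
    have htend : Tendsto (fun n : ℕ => ((1 + ((n:ℝ)+1)⁻¹ : ℝ) : ℂ)) atTop (𝓝[≠] (1:ℂ)) := by
      rw [tendsto_nhdsWithin_iff]
      constructor
      · have : Tendsto (fun n : ℕ => (1 + ((n:ℝ)+1)⁻¹ : ℝ)) atTop (𝓝 1) := by
          have := tendsto_one_div_add_atTop_nhds_zero_nat (𝕜 := ℝ)
          simp only [one_div] at this
          simpa using tendsto_const_nhds.add this
        have := (Complex.continuous_ofReal.tendsto 1).comp this
        simpa [Function.comp_def] using this
      · filter_upwards with n
        simp only [mem_compl_iff, mem_singleton_iff]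
        intro h
        have : (1 + ((n:ℝ)+1)⁻¹ : ℝ) = 1 := by exact_mod_cast h
        have hpos : (0:ℝ) < ((n:ℝ)+1)⁻¹ := by positivity
        linarith
    apply htend.frequently
    apply Filter.Frequently.of_forall
    intro n
    exact hreal _ (by positivity)
  exact hFG (show c ∈ U from hc)

lemma Jlem {α : ℝ} (hα : 1 ≤ α) {c : ℂ} (hc : 0 < c.re) :
    ∫ t in Ioi (0:ℝ), Complex.exp (-(c * ((t ^ α : ℝ) : ℂ))) =
      ((α⁻¹ : ℝ) : ℂ) * (Complex.Gamma α⁻¹ * c ^ (-((α⁻¹:ℝ):ℂ))) := by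
  have hα0 : 0 < α := lt_of_lt_of_le one_pos hα
  have hs : 0 < α⁻¹ := by positivity
  set g : ℝ → ℂ := fun y => (α⁻¹ * y ^ (α⁻¹ - 1) : ℝ) • Complex.exp (-(c * y)) with hg
  have h1 : ∫ x in Ioi (0:ℝ), (|α| * x ^ (α - 1)) • g (x ^ α) = ∫ y in Ioi (0:ℝ), g y :=
    integral_comp_rpow_Ioi g hα0.ne'
  have h2 : ∀ x ∈ Ioi (0:ℝ), (|α| * x ^ (α - 1)) • g (x ^ α)
      = Complex.exp (-(c * ((x ^ α : ℝ) : ℂ))) := by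
    intro x hx
    have hx0 : (0:ℝ) < x := hx
    rw [hg]
    simp only
    rw [smul_smul]
    have hkey : |α| * x ^ (α - 1) * (α⁻¹ * (x ^ α) ^ (α⁻¹ - 1)) = 1 := by
      rw [abs_of_pos hα0, ← Real.rpow_mul hx0.le]
      have e1 : α * (α⁻¹ - 1) = 1 - α := by field_simp
      rw [e1, ← mul_assoc, mul_comm (α * x ^ (α - 1)) α⁻¹, ← mul_assoc]
      rw [mul_comm α⁻¹ α, mul_inv_cancel₀ hα0.ne', one_mul, ← Real.rpow_add hx0]
      norm_num
    rw [hkey, one_smul]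
  calc ∫ t in Ioi (0:ℝ), Complex.exp (-(c * ((t ^ α : ℝ) : ℂ)))
      = ∫ x in Ioi (0:ℝ), (|α| * x ^ (α - 1)) • g (x ^ α) :=
        (setIntegral_congr_fun measurableSet_Ioi h2).symm
    _ = ∫ y in Ioi (0:ℝ), g y := h1
    _ = ∫ y in Ioi (0:ℝ), ((α⁻¹:ℝ):ℂ) * (((y ^ (α⁻¹ - 1) : ℝ) : ℂ) * Complex.exp (-(c * y))) := by
        apply setIntegral_congr_fun measurableSet_Ioi
        intro y hy
        rw [hg]
        simp only
        rw [Complex.real_smul]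
        push_cast
        ring
    _ = ((α⁻¹:ℝ):ℂ) * (Complex.Gamma α⁻¹ * c ^ (-((α⁻¹:ℝ):ℂ))) := by
        rw [integral_const_mul, gammaA hs hc]
        push_cast
        ring


lemma keyInt (α γ : ℝ) (hα : 1 < α) (hα2 : α < 2) (hγ : 0 < γ) :
    ∫ t : ℝ, Complex.exp (-((γ ^ α * |t| ^ α : ℝ) : ℂ) *
        (1 - Complex.I * Real.tan (Real.pi * α / 2) * Real.sign t)) =
      ((2 * α⁻¹ * Real.Gamma α⁻¹ *
        ((γ ^ α / |Real.cos (Real.pi * α / 2)|) ^ (-α⁻¹) *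
          Real.cos (α⁻¹ * (Real.pi - Real.pi * α / 2))) : ℝ) : ℂ) := by
  have hπ := Real.pi_pos
  set θ : ℝ := Real.pi * α / 2 with hθdef
  set τ : ℝ := Real.tan θ with hτdef
  have hθ1 : Real.pi / 2 < θ := by rw [hθdef]; nlinarith
  have hθ2 : θ < Real.pi := by rw [hθdef]; nlinarith
  have hcos : Real.cos θ < 0 :=
    Real.cos_neg_of_pi_div_two_lt_of_lt hθ1 (by linarith)
  have hb : (0:ℝ) < γ ^ α := Real.rpow_pos_of_pos hγ α
  set r : ℝ := γ ^ α / |Real.cos θ| with hrdef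
  have hr : 0 < r := by
    apply div_pos hb
    rw [abs_pos]
    exact hcos.ne
  set ψ : ℝ := Real.pi - θ with hψdef
  have hψ1 : 0 < ψ := by rw [hψdef]; linarith
  have hψ2 : ψ < Real.pi / 2 := by rw [hψdef]; linarith
  set s : ℝ := α⁻¹ with hsdef
  set c₁ : ℂ := ((γ ^ α : ℝ) : ℂ) * (1 - Complex.I * τ) with hc₁def
  set c₂ : ℂ := ((γ ^ α : ℝ) : ℂ) * (1 + Complex.I * τ) with hc₂def
  have hc₁re : 0 < c₁.re := by rw [hc₁def]; simp [Complex.mul_re]; exact hb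
  have hc₂re : 0 < c₂.re := by rw [hc₂def]; simp [Complex.mul_re]; exact hb
  -- polar forms
  have habs : |Real.cos θ| = -Real.cos θ := abs_of_neg hcos
  have hre : r * Real.cos ψ = γ ^ α := by
    rw [hψdef, Real.cos_pi_sub, hrdef, habs]
    field_simp [hcos.ne]
  have him : r * Real.sin ψ = -(γ ^ α * τ) := by
    rw [hψdef, Real.sin_pi_sub, hrdef, habs, hτdef, Real.tan_eq_sin_div_cos]
    field_simp
  have hpolar₁ : c₁ = (r : ℂ) * Complex.exp ((ψ:ℝ) * Complex.I) := by
    rw [hc₁def, Complex.exp_mul_I, ← Complex.ofReal_cos, ← Complex.ofReal_sin]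
    have e : ((r:ℝ) : ℂ) * (((Real.cos ψ : ℝ) : ℂ) + ((Real.sin ψ : ℝ):ℂ) * Complex.I)
        = ((r * Real.cos ψ : ℝ) : ℂ) + ((r * Real.sin ψ : ℝ) : ℂ) * Complex.I := by
      push_cast; ring
    rw [e, hre, him]
    push_cast
    ring
  have hpolar₂ : c₂ = (r : ℂ) * Complex.exp (((-ψ:ℝ)) * Complex.I) := by
    rw [hc₂def, Complex.exp_mul_I, ← Complex.ofReal_cos, ← Complex.ofReal_sin,
      Real.cos_neg, Real.sin_neg]
    have e : ((r:ℝ) : ℂ) * (((Real.cos ψ : ℝ) : ℂ) + (((-Real.sin ψ : ℝ)):ℂ) * Complex.I)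
        = ((r * Real.cos ψ : ℝ) : ℂ) - ((r * Real.sin ψ : ℝ) : ℂ) * Complex.I := by
      push_cast; ring
    rw [e, hre, him]
    push_cast
    ring
  have hc₁ne : c₁ ≠ 0 := fun h => by rw [h] at hc₁re; simp at hc₁re
  have hc₂ne : c₂ ≠ 0 := fun h => by rw [h] at hc₂re; simp at hc₂re
  have hlog₁ : Complex.log c₁ = ((Real.log r : ℝ) : ℂ) + (ψ:ℝ) * Complex.I := by
    rw [hpolar₁, Complex.log_ofReal_mul hr (Complex.exp_ne_zero _), Complex.log_exp]
    · simp
      linarith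
    · simp
      linarith
  have hlog₂ : Complex.log c₂ = ((Real.log r : ℝ) : ℂ) + ((-ψ:ℝ)) * Complex.I := by
    rw [hpolar₂, Complex.log_ofReal_mul hr (Complex.exp_ne_zero _), Complex.log_exp]
    · simp
      linarith
    · simp
      linarith
  have hcpow : c₁ ^ (-((s:ℝ):ℂ)) + c₂ ^ (-((s:ℝ):ℂ))
      = ((r ^ (-s) * (2 * Real.cos (s * ψ)) : ℝ) : ℂ) := by
    rw [Complex.cpow_def_of_ne_zero hc₁ne, Complex.cpow_def_of_ne_zero hc₂ne, hlog₁, hlog₂]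
    have e1 : ((((Real.log r : ℝ) : ℂ) + (ψ:ℝ) * Complex.I) * -((s:ℝ):ℂ) : ℂ)
        = ((-(s * Real.log r) : ℝ) : ℂ) + ((-(s * ψ) : ℝ) : ℂ) * Complex.I := by
      push_cast; ring
    have e2 : ((((Real.log r : ℝ) : ℂ) + ((-ψ:ℝ)) * Complex.I) * -((s:ℝ):ℂ) : ℂ)
        = ((-(s * Real.log r) : ℝ) : ℂ) + (((s * ψ) : ℝ) : ℂ) * Complex.I := by
      push_cast; ring
    rw [e1, e2, Complex.exp_add, Complex.exp_add, Complex.exp_mul_I, Complex.exp_mul_I,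
      ← Complex.ofReal_cos, ← Complex.ofReal_cos, ← Complex.ofReal_sin, ← Complex.ofReal_sin,
      ← Complex.ofReal_exp, Real.cos_neg, Real.sin_neg]
    have e3 : Real.exp (-(s * Real.log r)) = r ^ (-s) := by
      rw [Real.rpow_def_of_pos hr]
      congr 1
      ring
    rw [e3]
    push_cast
    ring
  -- the integrand is integrable
  have hInt := keyIntegrable hb hα.le τ
  rw [← intervalIntegral.integral_Iic_add_Ioi (hInt.integrableOn) (hInt.integrableOn)]
  have hIoi : (∫ t in Ioi (0:ℝ), Complex.exp (-((γ ^ α * |t| ^ α : ℝ) : ℂ)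
      * (1 - Complex.I * τ * Real.sign t)))
      = ∫ t in Ioi (0:ℝ), Complex.exp (-(c₁ * ((t ^ α : ℝ) : ℂ))) := by
    apply setIntegral_congr_fun measurableSet_Ioi
    intro t ht
    have ht0 : (0:ℝ) < t := ht
    simp only [abs_of_pos ht0, Real.sign_of_pos ht0, hc₁def]
    congr 1
    push_cast
    ring
  have hIic : (∫ t in Iic (0:ℝ), Complex.exp (-((γ ^ α * |t| ^ α : ℝ) : ℂ)
      * (1 - Complex.I * τ * Real.sign t)))
      = ∫ t in Ioi (0:ℝ), Complex.exp (-(c₂ * ((t ^ α : ℝ) : ℂ))) := by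
    rw [show Iic (0:ℝ) = Iic (-0) by norm_num, ← integral_comp_neg_Ioi]
    apply setIntegral_congr_fun measurableSet_Ioi
    intro t ht
    have ht0 : (0:ℝ) < t := ht
    simp only [abs_neg, abs_of_pos ht0, Real.sign_of_neg (show -t < 0 by linarith), hc₂def]
    congr 1
    push_cast
    ring
  rw [hIoi, hIic, Jlem hα.le hc₁re, Jlem hα.le hc₂re]
  have hGam : Complex.Gamma ((α:ℂ))⁻¹ = ((Real.Gamma α⁻¹ : ℝ) : ℂ) := by
    rw [show ((α:ℂ))⁻¹ = ((α⁻¹ : ℝ) : ℂ) by push_cast; ring, Complex.Gamma_ofReal]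
  rw [hGam]
  have : (((α⁻¹:ℝ):ℂ)) * (((Real.Gamma α⁻¹ : ℝ):ℂ) * c₂ ^ (-((α⁻¹:ℝ):ℂ)))
      + (((α⁻¹:ℝ):ℂ)) * (((Real.Gamma α⁻¹ : ℝ):ℂ) * c₁ ^ (-((α⁻¹:ℝ):ℂ)))
      = (((α⁻¹:ℝ):ℂ)) * (((Real.Gamma α⁻¹ : ℝ):ℂ)
          * (c₁ ^ (-((α⁻¹:ℝ):ℂ)) + c₂ ^ (-((α⁻¹:ℝ):ℂ)))) := by ring
  rw [this, show ((α⁻¹:ℝ)) = s from rfl, hcpow]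
  push_cast
  ring

end AuxLemmas

section MainThm
open Set FourierTransform
theorem stmt10
    (α γ : ℝ) (hα : 1 < α) (hα2 : α < 2) (hγ : 0 < γ)
    (μ : Measure ℝ) [IsProbabilityMeasure μ]
    (hφ : ∀ t : ℝ, ∫ x, Complex.exp (Complex.I * t * x) ∂μ =
      Complex.exp (-((γ ^ α * |t| ^ α : ℝ) : ℂ) *
        (1 - Complex.I * Real.tan (Real.pi * α / 2) * Real.sign t)))
    (f : ℝ → ℝ) (hf : Continuous f)
    (hdens : μ = volume.withDensity (fun x => ENNReal.ofReal (f x))) :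
    f 0 = γ⁻¹ * |Real.cos (Real.pi * α / 2)| ^ (α⁻¹) / |Real.Gamma (-α⁻¹)| := by
  have hπ := Real.pi_pos
  have hα0 : (0:ℝ) < α := by linarith
  have hb : (0:ℝ) < γ ^ α := Real.rpow_pos_of_pos hγ α
  -- the nonnegative continuous density g
  set g : ℝ → ℝ := fun x => max (f x) 0 with hgdef
  have hgc : Continuous g := hf.max continuous_const
  have hg0 : ∀ x, 0 ≤ g x := fun x => le_max_right _ _
  have hdens' : μ = volume.withDensity (fun x => ENNReal.ofReal (g x)) := by
    rw [hdens]
    congr 1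
    funext x
    rcases le_total (f x) 0 with h | h
    · rw [hgdef]
      simp only [max_eq_right h]
      rw [ENNReal.ofReal_eq_zero.mpr h, ENNReal.ofReal_zero]
    · rw [hgdef]
      simp only [max_eq_left h]
  -- g is integrable with integral 1
  have hgint : Integrable g := by
    have hμuniv : (volume.withDensity (fun x => ENNReal.ofReal (g x))) univ = 1 := by
      rw [← hdens']; exact measure_univ
    rw [withDensity_apply _ MeasurableSet.univ, Measure.restrict_univ] at hμuniv
    refine ⟨hgc.aestronglyMeasurable, ?_⟩
    rw [hasFiniteIntegral_iff_ofReal (Eventually.of_forall hg0), hμuniv]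
    exact ENNReal.one_lt_top
  set G : ℝ → ℂ := fun x => (g x : ℂ) with hGdef
  have hGint : Integrable G := hgint.ofReal
  have hGcont : Continuous G := Complex.continuous_ofReal.comp hgc
  -- characteristic function via density
  have hchar : ∀ t : ℝ, ∫ x : ℝ, (g x) • Complex.exp (Complex.I * t * x)
      = Complex.exp (-((γ ^ α * |t| ^ α : ℝ) : ℂ) *
          (1 - Complex.I * Real.tan (Real.pi * α / 2) * Real.sign t)) := by
    intro t
    rw [← hφ t, hdens']
    have hmeas : Measurable (fun x : ℝ => Real.toNNReal (g x)) := hgc.measurable.real_toNNReal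
    rw [show (fun x : ℝ => ENNReal.ofReal (g x))
        = fun x => ((Real.toNNReal (g x) : NNReal) : ENNReal) from rfl]
    rw [integral_withDensity_eq_integral_smul hmeas]
    apply integral_congr_ae
    filter_upwards with x
    rw [NNReal.smul_def, Real.coe_toNNReal _ (hg0 x)]
  -- Fourier transform of G
  set c : ℝ := -(2 * Real.pi) with hcdef
  have h2π : (0:ℝ) < 2 * Real.pi := by linarith
  have hcne : c ≠ 0 := by rw [hcdef]; exact neg_ne_zero.mpr h2π.ne'
  have hFour : 𝓕 G = fun w : ℝ =>
      Complex.exp (-((γ ^ α * |c * w| ^ α : ℝ) : ℂ) *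
        (1 - Complex.I * Real.tan (Real.pi * α / 2) * Real.sign (c * w))) := by
    funext w
    rw [Real.fourier_real_eq_integral_exp_smul, ← hchar (c * w)]
    apply integral_congr_ae
    filter_upwards with v
    rw [hGdef]
    simp only [smul_eq_mul]
    rw [Complex.real_smul, mul_comm]
    congr 1
    rw [hcdef]
    push_cast
    ring
  have h𝓕int : Integrable (𝓕 G) := by
    rw [hFour]
    exact (keyIntegrable hb hα.le (Real.tan (Real.pi * α / 2))).comp_mul_left' hcne
  have hinv := hGint.fourierInv_fourier_eq h𝓕int (hGcont.continuousAt (x := 0))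
  have hinv0 : 𝓕⁻ (𝓕 G) 0
      = ∫ w, 𝓕 G w := by
    rw [Real.fourierInv_eq']
    simp
  have hG0 : G 0 = ∫ w, 𝓕 G w := by rw [← hinv, hinv0]
  set K : ℝ := 2 * α⁻¹ * Real.Gamma α⁻¹ *
        ((γ ^ α / |Real.cos (Real.pi * α / 2)|) ^ (-α⁻¹) *
          Real.cos (α⁻¹ * (Real.pi - Real.pi * α / 2))) with hKdef
  have hval : ∫ w : ℝ, 𝓕 G w = (|c⁻¹| : ℝ) • ((K : ℝ) : ℂ) := by
    rw [hFour]
    refine (MeasureTheory.Measure.integral_comp_mul_left (fun t : ℝ =>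
      Complex.exp (-((γ ^ α * |t| ^ α : ℝ) : ℂ) *
        (1 - Complex.I * Real.tan (Real.pi * α / 2) * Real.sign t))) c).trans ?_
    rw [keyInt α γ hα hα2 hγ, hKdef]
  have hg0val : g 0 = |c⁻¹| * K := by
    have h := hG0.trans hval
    rw [hGdef] at h
    simp only at h
    rw [Complex.real_smul, ← Complex.ofReal_mul] at h
    exact_mod_cast h
  -- final arithmetic
  have hθcos : Real.cos (Real.pi * α / 2) < 0 :=
    Real.cos_neg_of_pi_div_two_lt_of_lt (by nlinarith) (by nlinarith)
  have habsc : |Real.cos (Real.pi * α / 2)| > 0 := abs_pos.mpr hθcos.ne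
  have habs_c : |c⁻¹| = (2 * Real.pi)⁻¹ := by
    rw [hcdef, abs_inv, abs_neg, abs_of_pos h2π]
  set s : ℝ := α⁻¹ with hsdef
  have hs0 : 0 < s := by rw [hsdef]; positivity
  have hs1 : s < 1 := by rw [hsdef]; rw [inv_lt_one_iff₀]; right; exact hα
  have hαne : α ≠ 0 := hα0.ne'
  -- (a) rpow piece
  have hA : (γ ^ α / |Real.cos (Real.pi * α / 2)|) ^ (-s)
      = γ⁻¹ * |Real.cos (Real.pi * α / 2)| ^ s := by
    rw [Real.div_rpow hb.le (abs_nonneg _)]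
    rw [← Real.rpow_mul hγ.le α (-s), show α * (-s) = -1 by rw [hsdef]; field_simp,
      Real.rpow_neg_one, Real.rpow_neg (abs_nonneg _), div_inv_eq_mul]
  -- (b) trig piece
  have hB : Real.cos (s * (Real.pi - Real.pi * α / 2)) = Real.sin (Real.pi * s) := by
    rw [show s * (Real.pi - Real.pi * α / 2) = Real.pi * s - Real.pi / 2 by
      rw [hsdef]; field_simp]
    exact Real.cos_sub_pi_div_two _
  -- (c) Gamma piece
  have h1s : (0:ℝ) < 1 - s := by linarith
  have hΓ1s : Real.Gamma (1 - s) = -s * Real.Gamma (-s) := by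
    rw [show (1:ℝ) - s = -s + 1 by ring, Real.Gamma_add_one (neg_ne_zero.mpr hs0.ne')]
  have hΓ1spos : 0 < Real.Gamma (1 - s) := Real.Gamma_pos_of_pos h1s
  have hΓneg : Real.Gamma (-s) < 0 := by nlinarith [hΓ1s, hΓ1spos]
  have hsin : 0 < Real.sin (Real.pi * s) :=
    Real.sin_pos_of_pos_of_lt_pi (by positivity) (by nlinarith)
  have hrefl := Real.Gamma_mul_Gamma_one_sub s
  have h2 : Real.Gamma s * (-s * Real.Gamma (-s)) * Real.sin (Real.pi * s) = Real.pi := by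
    rw [← hΓ1s, hrefl, div_mul_cancel₀ _ hsin.ne']
  have hGid : s * Real.Gamma s * Real.sin (Real.pi * s) = Real.pi / (-Real.Gamma (-s)) := by
    rw [eq_div_iff (by linarith : -Real.Gamma (-s) ≠ 0)]
    linear_combination h2
  -- put it together
  have hKval : |c⁻¹| * K = γ⁻¹ * |Real.cos (Real.pi * α / 2)| ^ α⁻¹ / |Real.Gamma (-α⁻¹)| := by
    rw [habs_c, hKdef, ← hsdef, hA, hB, abs_of_neg hΓneg]
    rw [show (2 * s * Real.Gamma s * (γ⁻¹ * |Real.cos (Real.pi * α / 2)| ^ s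
        * Real.sin (Real.pi * s))) = 2 * (s * Real.Gamma s * Real.sin (Real.pi * s))
        * (γ⁻¹ * |Real.cos (Real.pi * α / 2)| ^ s) by ring, hGid]
    field_simp
  have hpos : 0 < γ⁻¹ * |Real.cos (Real.pi * α / 2)| ^ α⁻¹ / |Real.Gamma (-α⁻¹)| := by
    have h1 : 0 < |Real.Gamma (-α⁻¹)| := by rw [← hsdef]; rw [abs_pos]; exact hΓneg.ne
    have h2' : 0 < |Real.cos (Real.pi * α / 2)| ^ (α⁻¹) := Real.rpow_pos_of_pos habsc _
    positivity
  have hgmax : max (f 0) 0 = γ⁻¹ * |Real.cos (Real.pi * α / 2)| ^ α⁻¹ / |Real.Gamma (-α⁻¹)| := by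
    rw [← hKval, ← hg0val, hgdef]
  rcases le_or_gt (f 0) 0 with h | h
  · rw [max_eq_right h] at hgmax
    linarith
  · rw [max_eq_left h.le] at hgmax
    exact hgmax

end MainThm
end

section
/- Let Y ~ Exp(1), U := 1 − e^{−Y}, X := 1/Y and X' := 1/U. Then X' − X ≥ 0 almost surely and E(X' − X) = γ, Euler's constant. -/
open MeasureTheory ProbabilityTheory Filter Topology Set Real
open scoped NNReal ENNReal

lemma aux_J : ∫ t in Ioi (0:ℝ), Real.log t * Real.exp (-t) = -Real.eulerMascheroniConstant := by
  set J := ∫ t in Ioi (0:ℝ), Real.log t * Real.exp (-t) with hJ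
  have h1 := Complex.hasDerivAt_GammaIntegral (s := 1) (by norm_num)
  have hval : (∫ t : ℝ in Ioi 0, (t:ℂ) ^ ((1:ℂ) - 1) * (Real.log t * Real.exp (-t))) = (J:ℂ) := by
    simp only [sub_self, Complex.cpow_zero, one_mul, hJ]
    simp_rw [← Complex.ofReal_mul]
    exact integral_ofReal
  rw [hval] at h1
  have h2 : Complex.Gamma =ᶠ[𝓝 (1:ℂ)] Complex.GammaIntegral := by
    have ho : IsOpen {s : ℂ | 0 < s.re} := isOpen_lt continuous_const Complex.continuous_re
    filter_upwards [ho.mem_nhds (by norm_num : (0:ℝ) < (1:ℂ).re)] with s hs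
    exact Complex.Gamma_eq_integral hs
  have h3 : HasDerivAt Complex.Gamma (J:ℂ) 1 := h1.congr_of_eventuallyEq h2
  have h4 : HasDerivAt Real.Gamma J 1 := by
    have := (by exact_mod_cast h3 : HasDerivAt Complex.Gamma (J:ℂ) ((1:ℝ):ℂ)).real_of_complex
    have hG : Real.Gamma = fun x : ℝ => (Complex.Gamma (x : ℂ)).re := rfl
    rw [hG]; simpa using this
  rw [Real.eulerMascheroniConstant_eq_neg_deriv, h4.deriv, neg_neg]

lemma aux_sub_pos {y : ℝ} (hy : 0 < y) : 0 < 1 - Real.exp (-y) := by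
  have : Real.exp (-y) < 1 := Real.exp_lt_one_iff.mpr (by linarith)
  linarith

lemma aux_sub_le (y : ℝ) : 1 - Real.exp (-y) ≤ y := by
  have := Real.add_one_le_exp (-y); linarith

lemma aux_g_nonneg {y : ℝ} (hy : 0 < y) :
    0 ≤ Real.exp (-y) / (1 - Real.exp (-y)) - Real.exp (-y) / y := by
  have h1 := aux_sub_pos hy
  have h2 := aux_sub_le y
  have := div_le_div_of_nonneg_left (Real.exp_pos (-y)).le h1 h2
  linarith

lemma aux_inv_le {y : ℝ} (hy : 0 < y) :
    Real.exp (-y) / (1 - Real.exp (-y)) ≤ 1 / y := by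
  have h1 := aux_sub_pos hy
  have hey : y ≤ Real.exp y - 1 := by have := Real.add_one_le_exp y; linarith
  have he1 : 0 < Real.exp y - 1 := lt_of_lt_of_le hy hey
  have key : Real.exp (-y) / (1 - Real.exp (-y)) = 1 / (Real.exp y - 1) := by
    rw [div_eq_div_iff h1.ne' he1.ne']
    have : Real.exp (-y) * Real.exp y = 1 := by
      rw [← Real.exp_add]; simp
    nlinarith [this]
  rw [key]
  exact one_div_le_one_div_of_le hy hey

lemma aux_g_le_one {y : ℝ} (hy : 0 < y) :
    Real.exp (-y) / (1 - Real.exp (-y)) - Real.exp (-y) / y ≤ 1 := by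
  have h3 := aux_inv_le hy
  have h4 : (1:ℝ) / y - Real.exp (-y) / y = (1 - Real.exp (-y)) / y := by ring
  have h5 : (1 - Real.exp (-y)) / y ≤ 1 := by
    rw [div_le_one hy]; exact aux_sub_le y
  linarith

lemma aux_exp_integrable {a : ℝ} : IntegrableOn (fun y : ℝ => Real.exp (-y)) (Ioi a) := by
  simpa using exp_neg_integrableOn_Ioi a one_pos

lemma aux_xexp_integrable : IntegrableOn (fun y : ℝ => y * Real.exp (-y)) (Ioi 0) := by
  have := Real.GammaIntegral_convergent (s := 2) (by norm_num)
  apply this.congr_fun ?_ measurableSet_Ioi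
  intro x hx
  dsimp only
  rw [show (2:ℝ) - 1 = 1 by norm_num, Real.rpow_one, mul_comm]

lemma aux_neg_log_integrable : IntegrableOn (fun y : ℝ => -Real.log y) (Ioc (0:ℝ) 1) := by
  apply intervalIntegral.integrableOn_deriv_of_nonneg (g := fun y => y - y * Real.log y)
  · exact (continuous_id.sub continuous_mul_log).continuousOn
  · intro x hx
    have h := ((hasDerivAt_id x).sub (Real.hasDerivAt_mul_log (ne_of_gt hx.1)))
    exact h.congr_deriv (by ring)
  · intro x hx
    have : Real.log x ≤ 0 := Real.log_nonpos hx.1.le hx.2.le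
    linarith

lemma aux_logexp_integrable : IntegrableOn (fun y : ℝ => Real.log y * Real.exp (-y)) (Ioi 0) := by
  rw [show Ioi (0:ℝ) = Ioc 0 1 ∪ Ioi 1 by rw [Ioc_union_Ioi_eq_Ioi zero_le_one]]
  apply IntegrableOn.union
  · apply Integrable.mono' aux_neg_log_integrable
      ((Real.measurable_log.mul (by fun_prop)).aestronglyMeasurable)
    filter_upwards [ae_restrict_mem measurableSet_Ioc] with y hy
    have h1 : Real.log y ≤ 0 := Real.log_nonpos hy.1.le hy.2
    have h2 : Real.exp (-y) ≤ 1 := Real.exp_le_one_iff.mpr (by linarith [hy.1])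
    rw [Real.norm_eq_abs, Pi.mul_apply, abs_mul, abs_of_nonpos h1, abs_of_pos (Real.exp_pos _)]
    nlinarith [Real.exp_pos (-y)]
  · apply Integrable.mono' (aux_xexp_integrable.mono_set (Ioi_subset_Ioi zero_le_one))
      ((Real.measurable_log.mul (by fun_prop)).aestronglyMeasurable)
    filter_upwards [ae_restrict_mem measurableSet_Ioi] with y hy
    have hy1 : (1:ℝ) < y := hy
    have h1 : 0 ≤ Real.log y := Real.log_nonneg hy1.le
    have h2 : Real.log y ≤ y := (Real.log_le_sub_one_of_pos (by linarith)).trans (by linarith)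
    rw [Real.norm_eq_abs, Pi.mul_apply, abs_mul, abs_of_nonneg h1, abs_of_pos (Real.exp_pos _)]
    exact mul_le_mul_of_nonneg_right h2 (Real.exp_pos _).le

lemma aux_g_integrable :
    IntegrableOn (fun y : ℝ => Real.exp (-y) / (1 - Real.exp (-y)) - Real.exp (-y) / y) (Ioi 0) := by
  have hmeas : Measurable (fun y : ℝ => Real.exp (-y) / (1 - Real.exp (-y)) - Real.exp (-y) / y) := by
    fun_prop
  rw [show Ioi (0:ℝ) = Ioc 0 1 ∪ Ioi 1 by rw [Ioc_union_Ioi_eq_Ioi zero_le_one]]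
  apply IntegrableOn.union
  · have hc : IntegrableOn (fun _ : ℝ => (1:ℝ)) (Ioc (0:ℝ) 1) :=
      integrableOn_const measure_Ioc_lt_top.ne
    apply Integrable.mono' hc hmeas.aestronglyMeasurable
    filter_upwards [ae_restrict_mem measurableSet_Ioc] with y hy
    rw [Real.norm_eq_abs, abs_of_nonneg (aux_g_nonneg hy.1)]
    exact aux_g_le_one hy.1
  · have hconst : (0:ℝ) < 1 - Real.exp (-1) := aux_sub_pos one_pos
    have hc : IntegrableOn (fun y : ℝ => Real.exp (-y) / (1 - Real.exp (-1))) (Ioi (1:ℝ)) :=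
      (aux_exp_integrable (a := 1)).div_const (1 - Real.exp (-1))
    apply Integrable.mono' hc hmeas.aestronglyMeasurable
    filter_upwards [ae_restrict_mem measurableSet_Ioi] with y hy
    have hy0 : (0:ℝ) < y := lt_trans one_pos hy
    rw [Real.norm_eq_abs, abs_of_nonneg (aux_g_nonneg hy0)]
    have h1 : Real.exp (-y) / (1 - Real.exp (-y)) ≤ Real.exp (-y) / (1 - Real.exp (-1)) := by
      apply div_le_div_of_nonneg_left (Real.exp_pos _).le hconst
      have : Real.exp (-y) ≤ Real.exp (-1) := Real.exp_le_exp.mpr (by linarith [(mem_Ioi.mp hy).le])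
      linarith
    have h2 : 0 ≤ Real.exp (-y) / y := div_nonneg (Real.exp_pos _).le hy0.le
    linarith

lemma aux_hd_exp (x : ℝ) : HasDerivAt (fun y : ℝ => Real.exp (-y)) (-Real.exp (-x)) x := by
  have h := (Real.hasDerivAt_exp (-x)).comp x ((hasDerivAt_id x).neg)
  simpa [Function.comp_def] using h

lemma aux_fracexp_integrable {ε : ℝ} (hε : 0 < ε) :
    IntegrableOn (fun y : ℝ => Real.exp (-y) / (1 - Real.exp (-y))) (Ioi ε) := by
  have hc : IntegrableOn (fun y : ℝ => Real.exp (-y) / (1 - Real.exp (-ε))) (Ioi ε) :=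
    aux_exp_integrable.div_const _
  have hm : Measurable (fun y : ℝ => Real.exp (-y) / (1 - Real.exp (-y))) :=
    (Real.measurable_exp.comp measurable_neg).div
      (measurable_const.sub (Real.measurable_exp.comp measurable_neg))
  apply Integrable.mono' hc hm.aestronglyMeasurable
  filter_upwards [ae_restrict_mem measurableSet_Ioi] with y hy
  have hy0 : (0:ℝ) < y := lt_trans hε hy
  rw [Real.norm_eq_abs, abs_of_nonneg (div_nonneg (Real.exp_pos _).le (aux_sub_pos hy0).le)]
  apply div_le_div_of_nonneg_left (Real.exp_pos _).le (aux_sub_pos hε)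
  have : Real.exp (-y) ≤ Real.exp (-ε) := Real.exp_le_exp.mpr (by linarith [(mem_Ioi.mp hy).le])
  linarith

lemma aux_expdiv_integrable {ε : ℝ} (hε : 0 < ε) :
    IntegrableOn (fun y : ℝ => Real.exp (-y) / y) (Ioi ε) := by
  have hc : IntegrableOn (fun y : ℝ => Real.exp (-y) / ε) (Ioi ε) :=
    aux_exp_integrable.div_const _
  have hm : Measurable (fun y : ℝ => Real.exp (-y) / y) :=
    (Real.measurable_exp.comp measurable_neg).div measurable_id
  apply Integrable.mono' hc hm.aestronglyMeasurable
  filter_upwards [ae_restrict_mem measurableSet_Ioi] with y hy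
  have hy0 : (0:ℝ) < y := lt_trans hε hy
  rw [Real.norm_eq_abs, abs_of_nonneg (div_nonneg (Real.exp_pos _).le hy0.le)]
  exact div_le_div_of_nonneg_left (Real.exp_pos _).le hε hy.le

lemma aux_IBP_A {ε : ℝ} (hε : 0 < ε) :
    ∫ y in Ioi ε, Real.exp (-y) / (1 - Real.exp (-y)) = -Real.log (1 - Real.exp (-ε)) := by
  have key : ∫ y in Ioi ε, Real.exp (-y) / (1 - Real.exp (-y))
      = 0 - Real.log (1 - Real.exp (-ε)) := by
    apply integral_Ioi_of_hasDerivAt_of_tendsto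
      (f := fun y => Real.log (1 - Real.exp (-y)))
    · apply ContinuousWithinAt.log
      · exact ((continuous_const.sub (Real.continuous_exp.comp continuous_neg)).continuousAt).continuousWithinAt
      · exact (aux_sub_pos hε).ne'
    · intro x hx
      have h1 : HasDerivAt (fun y : ℝ => 1 - Real.exp (-y)) (Real.exp (-x)) x := by
        simpa using (aux_hd_exp x).const_sub 1
      have := h1.log (aux_sub_pos (lt_trans hε hx)).ne'
      exact this
    · exact aux_fracexp_integrable hε
    · have h1 : Tendsto (fun y : ℝ => 1 - Real.exp (-y)) atTop (𝓝 1) := by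
        have : Tendsto (fun y : ℝ => Real.exp (-y)) atTop (𝓝 0) := by
          simpa using Real.tendsto_exp_neg_atTop_nhds_zero
        simpa using (tendsto_const_nhds (x := (1:ℝ))).sub this
      have := ((Real.continuousAt_log one_ne_zero).tendsto.comp h1)
      simpa [Function.comp_def] using this
  rw [key]; ring

lemma aux_IBP_B {ε : ℝ} (hε : 0 < ε) :
    ∫ y in Ioi ε, (Real.exp (-y) / y - Real.log y * Real.exp (-y))
      = -(Real.exp (-ε) * Real.log ε) := by
  have key : ∫ y in Ioi ε, (Real.exp (-y) / y - Real.log y * Real.exp (-y))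
      = 0 - Real.exp (-ε) * Real.log ε := by
    apply integral_Ioi_of_hasDerivAt_of_tendsto
      (f := fun y => Real.exp (-y) * Real.log y)
    · exact (((Real.continuous_exp.comp continuous_neg).continuousAt).mul
        (Real.continuousAt_log hε.ne')).continuousWithinAt
    · intro x hx
      have hx0 : (0:ℝ) < x := lt_trans hε hx
      have h := (aux_hd_exp x).mul (Real.hasDerivAt_log hx0.ne')
      exact h.congr_deriv (by rw [div_eq_mul_inv]; ring)
    · apply Integrable.sub (aux_expdiv_integrable hε)
      exact (aux_logexp_integrable.mono_set (Ioi_subset_Ioi hε.le))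
    · apply squeeze_zero_norm' (a := fun y : ℝ => y * Real.exp (-y))
      · filter_upwards [eventually_ge_atTop (1:ℝ)] with y hy
        have h1 : 0 ≤ Real.log y := Real.log_nonneg hy
        have h2 : Real.log y ≤ y := (Real.log_le_sub_one_of_pos (by linarith)).trans (by linarith)
        rw [Real.norm_eq_abs, abs_mul, abs_of_pos (Real.exp_pos _), abs_of_nonneg h1]
        rw [mul_comm]
        exact mul_le_mul_of_nonneg_right h2 (Real.exp_pos _).le
      · simpa using Real.tendsto_pow_mul_exp_neg_atTop_nhds_zero 1
  rw [key]; ring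

lemma aux_boundary_tendsto :
    Tendsto (fun ε : ℝ => -Real.log (1 - Real.exp (-ε)) + Real.exp (-ε) * Real.log ε)
      (𝓝[>] 0) (𝓝 0) := by
  have hslope : Tendsto (fun ε : ℝ => (1 - Real.exp (-ε)) / ε) (𝓝[>] 0) (𝓝 1) := by
    have hd : HasDerivAt (fun y : ℝ => 1 - Real.exp (-y)) 1 0 := by
      have h := (Real.hasDerivAt_exp (-0)).comp 0 ((hasDerivAt_id (0:ℝ)).neg)
      have h2 := h.const_sub 1
      norm_num at h2
      exact h2
    have := hasDerivAt_iff_tendsto_slope.mp hd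
    have h3 := this.mono_left (nhdsWithin_mono _ (fun x hx => ne_of_gt hx : Ioi (0:ℝ) ⊆ {(0:ℝ)}ᶜ))
    apply h3.congr'
    filter_upwards [self_mem_nhdsWithin] with x hx
    rw [slope_def_field]
    norm_num
  have hterm1 : Tendsto (fun ε : ℝ => Real.log (ε / (1 - Real.exp (-ε)))) (𝓝[>] 0) (𝓝 0) := by
    have hinv : Tendsto (fun ε : ℝ => ε / (1 - Real.exp (-ε))) (𝓝[>] 0) (𝓝 1) := by
      have := (hslope.inv₀ one_ne_zero)
      norm_num at this
      exact this
    have hlog := (Real.continuousAt_log one_ne_zero).tendsto.comp hinv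
    simpa [Function.comp_def] using hlog
  have hterm2 : Tendsto (fun ε : ℝ => (Real.exp (-ε) - 1) * Real.log ε) (𝓝[>] 0) (𝓝 0) := by
    apply squeeze_zero_norm' (a := fun ε : ℝ => ‖Real.log ε * ε‖)
    · filter_upwards [self_mem_nhdsWithin] with ε (hε : 0 < ε)
      rw [Real.norm_eq_abs, Real.norm_eq_abs, abs_mul, abs_mul, mul_comm (|Real.log ε|)]
      apply mul_le_mul_of_nonneg_right _ (abs_nonneg _)
      rw [abs_of_nonpos (by linarith [(Real.exp_pos (-ε)).le, Real.exp_le_one_iff.mpr (by linarith : -ε ≤ 0)] : Real.exp (-ε) - 1 ≤ 0)]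
      rw [abs_of_pos hε]
      have := aux_sub_le ε
      linarith
    · have h := tendsto_log_mul_rpow_nhdsGT_zero one_pos
      simp only [Real.rpow_one] at h
      exact (tendsto_zero_iff_norm_tendsto_zero.mp h)
  have heq : (fun ε : ℝ => Real.log (ε / (1 - Real.exp (-ε))) + (Real.exp (-ε) - 1) * Real.log ε)
      =ᶠ[𝓝[>] (0:ℝ)]
      (fun ε : ℝ => -Real.log (1 - Real.exp (-ε)) + Real.exp (-ε) * Real.log ε) := by
    filter_upwards [self_mem_nhdsWithin] with ε (hε : 0 < ε)
    rw [Real.log_div (ne_of_gt hε) (ne_of_gt (aux_sub_pos hε))]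
    ring
  have h := (hterm1.add hterm2)
  norm_num at h
  exact Tendsto.congr' heq h

lemma aux_Feps {ε : ℝ} (hε : 0 < ε) :
    ∫ y in Ioi ε, (Real.exp (-y) / (1 - Real.exp (-y)) - Real.exp (-y) / y)
      = (-Real.log (1 - Real.exp (-ε)) + Real.exp (-ε) * Real.log ε)
        - ∫ y in Ioi ε, Real.log y * Real.exp (-y) := by
  have hle : IntegrableOn (fun y : ℝ => Real.log y * Real.exp (-y)) (Ioi ε) :=
    aux_logexp_integrable.mono_set (Ioi_subset_Ioi hε.le)
  have h1 : ∫ y in Ioi ε, (Real.exp (-y) / (1 - Real.exp (-y)) - Real.exp (-y) / y)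
      = (∫ y in Ioi ε, Real.exp (-y) / (1 - Real.exp (-y))) - ∫ y in Ioi ε, Real.exp (-y) / y :=
    integral_sub (aux_fracexp_integrable hε) (aux_expdiv_integrable hε)
  have h2 : ∫ y in Ioi ε, (Real.exp (-y) / y - Real.log y * Real.exp (-y))
      = (∫ y in Ioi ε, Real.exp (-y) / y) - ∫ y in Ioi ε, Real.log y * Real.exp (-y) :=
    integral_sub (aux_expdiv_integrable hε) hle
  have h3 := aux_IBP_B hε
  rw [h2] at h3
  rw [h1, aux_IBP_A hε]
  linarith

lemma aux_main : ∫ y in Ioi (0:ℝ), (Real.exp (-y) / (1 - Real.exp (-y)) - Real.exp (-y) / y)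
    = Real.eulerMascheroniConstant := by
  set ε : ℕ → ℝ := fun n => 1 / (n + 1) with hεdef
  have hεpos : ∀ n, 0 < ε n := fun n => by positivity
  have hεt : Tendsto ε atTop (𝓝[>] (0:ℝ)) := by
    apply tendsto_nhdsWithin_of_tendsto_nhds_of_eventually_within
    · exact tendsto_one_div_add_atTop_nhds_zero_nat
    · exact Eventually.of_forall fun n => hεpos n
  have hmono : Monotone (fun n => Ioi (ε n)) := by
    intro n m hnm
    apply Ioi_subset_Ioi
    apply one_div_le_one_div_of_le (by positivity)
    exact_mod_cast add_le_add_left (Nat.cast_le.mpr hnm) 1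
  have hunion : (⋃ n, Ioi (ε n)) = Ioi (0:ℝ) := by
    ext x
    simp only [mem_iUnion, mem_Ioi]
    constructor
    · rintro ⟨n, hn⟩; exact lt_trans (hεpos n) hn
    · intro hx
      obtain ⟨n, hn⟩ := exists_nat_one_div_lt hx
      exact ⟨n, hn⟩
  have T1 : Tendsto (fun n => ∫ y in Ioi (ε n),
        (Real.exp (-y) / (1 - Real.exp (-y)) - Real.exp (-y) / y)) atTop
      (𝓝 (∫ y in Ioi (0:ℝ), (Real.exp (-y) / (1 - Real.exp (-y)) - Real.exp (-y) / y))) := by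
    have := tendsto_setIntegral_of_monotone (fun n => measurableSet_Ioi) hmono
      (hunion ▸ aux_g_integrable)
    rwa [hunion] at this
  have T2 : Tendsto (fun n => ∫ y in Ioi (ε n), Real.log y * Real.exp (-y)) atTop
      (𝓝 (-Real.eulerMascheroniConstant)) := by
    have := tendsto_setIntegral_of_monotone (fun n => measurableSet_Ioi) hmono
      (hunion ▸ aux_logexp_integrable)
    rwa [hunion, aux_J] at this
  have T3 : Tendsto (fun n => -Real.log (1 - Real.exp (-(ε n))) + Real.exp (-(ε n)) * Real.log (ε n))
      atTop (𝓝 0) := aux_boundary_tendsto.comp hεt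
  have T4 : Tendsto (fun n => ∫ y in Ioi (ε n),
        (Real.exp (-y) / (1 - Real.exp (-y)) - Real.exp (-y) / y)) atTop
      (𝓝 (0 - -Real.eulerMascheroniConstant)) := by
    apply Tendsto.congr' _ (T3.sub T2)
    filter_upwards with n
    exact (aux_Feps (hεpos n)).symm
  have := tendsto_nhds_unique T1 T4
  rw [this]; ring

theorem stmt15
    {Ω : Type*} [MeasureSpace Ω] [IsProbabilityMeasure (ℙ : Measure Ω)]
    (Y : Ω → ℝ) (hY : Measurable Y)
    (hexp : Measure.map Y ℙ =
      volume.withDensity (fun y => ENNReal.ofReal (if 0 < y then Real.exp (-y) else 0))) :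
    (∀ᵐ ω ∂ℙ, 0 ≤ 1 / (1 - Real.exp (-Y ω)) - 1 / Y ω) ∧
    ∫ ω, (1 / (1 - Real.exp (-Y ω)) - 1 / Y ω) ∂ℙ = Real.eulerMascheroniConstant := by
  have hdm : Measurable (fun y : ℝ => if 0 < y then Real.exp (-y) else 0) := by
    apply Measurable.ite measurableSet_Ioi (by fun_prop) measurable_const
  -- a.e. positivity of Y
  have hYpos : ∀ᵐ ω ∂ℙ, 0 < Y ω := by
    have hset : MeasurableSet {y : ℝ | 0 < y} := measurableSet_Ioi
    rw [ae_iff]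
    have : {ω | ¬ 0 < Y ω} = Y ⁻¹' (Iic 0) := by ext ω; simp
    rw [this, ← Measure.map_apply hY measurableSet_Iic, hexp,
      withDensity_apply _ measurableSet_Iic]
    rw [setLIntegral_congr_fun measurableSet_Iic
      ((fun y hy => by
        simp only [mem_Iic] at hy
        rw [if_neg (by linarith), ENNReal.ofReal_zero] : ∀ y ∈ Iic (0:ℝ),
          ENNReal.ofReal (if 0 < y then Real.exp (-y) else 0) = (fun _ => 0) y))]
    simp
  have hfmeas : Measurable (fun y : ℝ => 1 / (1 - Real.exp (-y)) - 1 / y) := by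
    apply Measurable.sub
    · exact measurable_const.div (measurable_const.sub (Real.measurable_exp.comp measurable_neg))
    · exact measurable_const.div measurable_id
  constructor
  · filter_upwards [hYpos] with ω hω
    have h1 := aux_sub_pos hω
    have h2 := aux_sub_le (Y ω)
    have := one_div_le_one_div_of_le h1 h2
    linarith
  · have step1 : ∫ ω, (1 / (1 - Real.exp (-Y ω)) - 1 / Y ω) ∂ℙ
        = ∫ y, (1 / (1 - Real.exp (-y)) - 1 / y) ∂(Measure.map Y ℙ) :=
      (integral_map hY.aemeasurable hfmeas.aestronglyMeasurable).symm
    rw [step1, hexp]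
    have hd_eq : (fun y : ℝ => ENNReal.ofReal (if 0 < y then Real.exp (-y) else 0))
        = (fun y : ℝ => ((if 0 < y then Real.exp (-y) else 0).toNNReal : ℝ≥0∞)) := by
      funext y; rfl
    rw [hd_eq, integral_withDensity_eq_integral_smul
      (by exact hdm.real_toNNReal : Measurable fun y : ℝ => (if 0 < y then Real.exp (-y) else 0).toNNReal)]
    have step2 : (fun y : ℝ => (if 0 < y then Real.exp (-y) else 0).toNNReal
          • (1 / (1 - Real.exp (-y)) - 1 / y))
        = Set.indicator (Ioi (0:ℝ))
            (fun y => Real.exp (-y) / (1 - Real.exp (-y)) - Real.exp (-y) / y) := by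
      funext y
      by_cases hy : 0 < y
      · rw [Set.indicator_of_mem (mem_Ioi.mpr hy)]
        rw [if_pos hy, NNReal.smul_def, Real.coe_toNNReal _ (Real.exp_pos _).le, smul_eq_mul]
        rw [mul_sub, mul_one_div, mul_one_div]
      · rw [Set.indicator_of_notMem (by simpa using hy)]
        rw [if_neg hy]
        simp
    rw [step2, integral_indicator measurableSet_Ioi, aux_main]
end
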